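/- Let U_1,…,U_k be i.i.d. Uniform([0,1]) and let X_1 ≤ ⋯ ≤ X_k be their order statistics. Then E[∏_{a=1}^{k} X_a^{2(k-a)}] = k! / ∏_{r=1}^{k} r(2k-r) = (k-1)!/(2k-1)!. -/

import Mathlib

/-
Almost every point of the cube has distinct coordinates, so the cube splits, up to a null set,
into the `k!` regions `{u | u ∘ σ strictly increasing}`, each carried onto the ordered simplex
`0 < u₀ < ⋯ < u_{k-1} < 1` by a measure-preserving relabelling of coordinates; on each of them
`u ∘ sort u = u ∘ σ`. Hence the expectation is `k!` times the integral of `∏ uₐ ^ eₐ` over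
the simplex, which Fubini evaluates one coordinate at a time, starting with the largest:
integrating `x ^ m` over `(0, t)` turns `t ^ m` into `t ^ (m + 1) / (m + 1)`.
With `eₐ = 2 (k - a - 1)` the successive exponents `m + 1` are `j (2k - j)`, `j = 1, …, k`.
-/

open MeasureTheory Finset Set
open scoped Nat

theorem Fin.strictMono_snoc {α : Type*} [Preorder α] {n : ℕ} {v : Fin n → α} {x : α} :
    StrictMono (Fin.snoc v x : Fin (n + 1) → α) ↔ StrictMono v ∧ ∀ i, v i < x := by
  refine ⟨fun h => ⟨fun i j hij => ?_, fun i => ?_⟩, fun ⟨hv, hx⟩ a b hab => ?_⟩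
  · simpa using h (Fin.castSucc_lt_castSucc_iff.2 hij)
  · simpa using h (Fin.castSucc_lt_last i)
  · induction b using Fin.lastCases with
    | last =>
      induction a using Fin.lastCases with
      | last => exact absurd hab (lt_irrefl _)
      | cast i => simpa using hx i
    | cast j =>
      induction a using Fin.lastCases with
      | last => exact absurd hab (Fin.castSucc_lt_last j).not_gt
      | cast i => simpa using hv (Fin.castSucc_lt_castSucc_iff.1 hab)

theorem prod_Icc_one_eq_prod_range {M : Type*} [CommMonoid M] (f : ℕ → M) (k : ℕ) :
    ∏ r ∈ Icc 1 k, f r = ∏ j ∈ range k, f (j + 1) := by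
  rw [← Finset.Ico_add_one_right_eq_Icc, prod_Ico_eq_prod_range]
  simp [add_comm]

theorem measurableSet_setOf_strictMono (n : ℕ) :
    MeasurableSet {u : Fin n → ℝ | StrictMono u} := by
  simp only [StrictMono, ofPred_forall]
  exact .iInter fun i => .iInter fun j => .iInter fun _ =>
    measurableSet_lt (measurable_pi_apply i) (measurable_pi_apply j)

theorem Tuple.pairwise_disjoint_setOf_strictMono_comp {α : Type*} [PartialOrder α] {k : ℕ} :
    Pairwise (Function.onFun Disjoint fun σ : Equiv.Perm (Fin k) =>
      {u : Fin k → α | StrictMono (u ∘ σ)}) := by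
  intro σ τ hστ
  refine disjoint_left.2 fun u (hσ : StrictMono (u ∘ σ)) (hτ : StrictMono (u ∘ τ)) =>
    hστ ?_
  have hu : Function.Injective u := hσ.injective.of_comp_right σ.surjective
  exact Equiv.ext fun a => hu (congrFun (Tuple.unique_monotone hσ.monotone hτ.monotone) a)

theorem Tuple.strictMono_comp_sort {α : Type*} [LinearOrder α] {k : ℕ} {u : Fin k → α}
    (hu : Function.Injective u) : StrictMono (u ∘ Tuple.sort u) :=
  (Tuple.monotone_sort u).strictMono_of_injective (hu.comp (Tuple.sort u).injective)

section Symmetrization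

variable {k : ℕ} (μ : Measure ℝ) [SigmaFinite μ] [NullSingletonClass μ]

theorem MeasureTheory.Measure.pi_setOf_apply_eq_apply_eq_zero {i j : Fin k} (hij : i ≠ j) :
    Measure.pi (fun _ => μ) {u : Fin k → ℝ | u i = u j} = 0 := by
  cases k with
  | zero => exact i.elim0
  | succ k =>
    obtain ⟨i, rfl⟩ := Fin.exists_succAbove_eq hij
    have hmeas : MeasurableSet {p : ℝ × (Fin k → ℝ) | p.2 i = p.1} :=
      measurableSet_eq_fun ((measurable_pi_apply i).comp measurable_snd) measurable_fst
    rw [show {u : Fin (k + 1) → ℝ | u (j.succAbove i) = u j} =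
        MeasurableEquiv.piFinSuccAbove (fun _ => ℝ) j ⁻¹' {p | p.2 i = p.1} from rfl,
      (measurePreserving_piFinSuccAbove (fun _ => μ) j).measure_preimage
      hmeas.nullMeasurableSet, Measure.prod_apply hmeas]
    simp [Measure.pi_hyperplane]

theorem MeasureTheory.Measure.ae_injective_pi :
    ∀ᵐ u ∂Measure.pi (fun _ : Fin k => μ), Function.Injective u := by
  have h : ∀ i j : Fin k, ∀ᵐ u ∂Measure.pi (fun _ => μ), u i = u j → i = j := by
    intro i j
    by_cases hij : i = j
    · exact .of_forall fun _ _ => hij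
    · exact (measure_eq_zero_iff_ae_notMem.1 (Measure.pi_setOf_apply_eq_apply_eq_zero μ hij)).mono
        fun u hu h => absurd h hu
  filter_upwards [ae_all_iff.2 fun i => ae_all_iff.2 (h i)] with u hu i j using hu i j

theorem integral_comp_sort {E : Type*} [NormedAddCommGroup E] [NormedSpace ℝ E]
    {F : (Fin k → ℝ) → E} (hF : IntegrableOn F {u | StrictMono u} (Measure.pi fun _ => μ)) :
    ∫ u, F (u ∘ Tuple.sort u) ∂Measure.pi (fun _ => μ) =
      k ! • ∫ u in {u | StrictMono u}, F u ∂Measure.pi (fun _ => μ) := by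
  set ν := Measure.pi fun _ : Fin k => μ
  let P : Equiv.Perm (Fin k) → (Fin k → ℝ) ≃ᵐ (Fin k → ℝ) := fun σ =>
    MeasurableEquiv.piCongrLeft (fun _ => ℝ) σ.symm
  have hP : ∀ σ u, P σ u = u ∘ σ := fun σ u => by
    ext a
    simpa using MeasurableEquiv.piCongrLeft_apply_apply (β := fun _ => ℝ) σ.symm u (σ a)
  have hPν : ∀ σ, MeasurePreserving (P σ) ν ν := fun σ =>
    measurePreserving_piCongrLeft (fun _ => μ) σ.symm
  let T : Equiv.Perm (Fin k) → Set (Fin k → ℝ) := fun σ => {u | StrictMono (u ∘ σ)}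
  have hPT : ∀ σ, P σ ⁻¹' {u | StrictMono u} = T σ := fun σ => by
    ext u
    simp [T, hP]
  have hT : ∀ σ, MeasurableSet (T σ) := fun σ =>
    hPT σ ▸ (P σ).measurable (measurableSet_setOf_strictMono k)
  have hsortT : ∀ σ, ∀ u ∈ T σ, u ∘ Tuple.sort u = u ∘ σ := fun σ u hu =>
    (Tuple.comp_sort_eq_comp_iff_monotone.2 hu.monotone).symm
  have hcover : ∀ᵐ u ∂ν, u ∈ ⋃ σ, T σ := (Measure.ae_injective_pi μ).mono fun u hu =>
    mem_iUnion.2 ⟨Tuple.sort u, Tuple.strictMono_comp_sort hu⟩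
  have hpiece : ∀ σ,
      ∫ u in T σ, F (u ∘ Tuple.sort u) ∂ν = ∫ u in {u | StrictMono u}, F u ∂ν := by
    intro σ
    rw [setIntegral_congr_fun (hT σ) fun u hu => congrArg F (hsortT σ u hu)]
    simp_rw [← hP, ← hPT]
    exact (hPν σ).setIntegral_preimage_emb (P σ).measurableEmbedding F _
  have hint : ∀ σ, IntegrableOn (fun u => F (u ∘ Tuple.sort u)) (T σ) ν := by
    intro σ
    refine IntegrableOn.congr_fun ?_ (fun u hu => (congrArg F (hsortT σ u hu)).symm) (hT σ)
    simp_rw [← hP, ← hPT]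
    exact ((hPν σ).integrableOn_comp_preimage (P σ).measurableEmbedding).2 hF
  have hsum := integral_iUnion_fintype hT Tuple.pairwise_disjoint_setOf_strictMono_comp hint
  rw [Measure.restrict_eq_self_of_ae_mem hcover] at hsum
  simp [hsum, hpiece, Fintype.card_perm]

end Symmetrization

def orderedSimplex (n : ℕ) (t : ℝ) : Set (Fin n → ℝ) :=
  {u | StrictMono u} ∩ univ.pi fun _ => Ioo 0 t

theorem measurableSet_orderedSimplex (n : ℕ) (t : ℝ) : MeasurableSet (orderedSimplex n t) :=
  (measurableSet_setOf_strictMono n).inter (.univ_pi fun _ => measurableSet_Ioo)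

theorem orderedSimplex_subset_Icc (n : ℕ) (t : ℝ) :
    orderedSimplex n t ⊆ Icc 0 (fun _ => t) := fun _ hu =>
  ⟨fun i => (hu.2 i trivial).1.le, fun i => (hu.2 i trivial).2.le⟩

theorem snoc_mem_orderedSimplex_iff {n : ℕ} {v : Fin n → ℝ} {x t : ℝ} :
    Fin.snoc v x ∈ orderedSimplex (n + 1) t ↔ x ∈ Ioo 0 t ∧ v ∈ orderedSimplex n x := by
  simp only [orderedSimplex, mem_inter_iff, mem_ofPred_eq, mem_univ_pi, Fin.strictMono_snoc,
    Fin.forall_fin_succ', Fin.snoc_castSucc, Fin.snoc_last]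
  exact ⟨fun ⟨⟨hv, hlt⟩, hmem, hx⟩ => ⟨hx, hv, fun i => ⟨(hmem i).1, hlt i⟩⟩,
    fun ⟨hx, hv, hmem⟩ =>
      ⟨⟨hv, fun i => (hmem i).2⟩, fun i => ⟨(hmem i).1, (hmem i).2.trans hx.2⟩, hx⟩⟩

theorem setIntegral_orderedSimplex_succ {E : Type*} [NormedAddCommGroup E] [NormedSpace ℝ E]
    {n : ℕ} {t : ℝ} {F : (Fin (n + 1) → ℝ) → E}
    (hF : IntegrableOn F (orderedSimplex (n + 1) t)) :
    ∫ u in orderedSimplex (n + 1) t, F u =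
      ∫ x in Ioo 0 t, ∫ v in orderedSimplex n x, F (Fin.snoc v x) := by
  have he := (volume_preserving_piFinSuccAbove (fun _ : Fin (n + 1) => ℝ) (Fin.last n)).symm
  have he_apply : ∀ p : ℝ × (Fin n → ℝ),
      (MeasurableEquiv.piFinSuccAbove (fun _ => ℝ) (Fin.last n)).symm p = Fin.snoc p.2 p.1 :=
    fun p => Fin.insertNth_last' p.1 p.2
  have hG : ∀ x v, (orderedSimplex (n + 1) t).indicator F (Fin.snoc v x) =
      (Ioo 0 t).indicator
        (fun x => (orderedSimplex n x).indicator (fun v => F (Fin.snoc v x)) v) x := by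
    intro x v
    by_cases hx : x ∈ Ioo 0 t <;> by_cases hv : v ∈ orderedSimplex n x <;>
      simp [indicator, snoc_mem_orderedSimplex_iff, hx, hv]
  rw [← integral_indicator (measurableSet_orderedSimplex _ _), ← he.integral_comp',
    Measure.volume_eq_prod, integral_prod, ← integral_indicator measurableSet_Ioo]
  · refine integral_congr_ae (.of_forall fun x => ?_)
    simp only [he_apply, hG]
    by_cases hx : x ∈ Ioo 0 t
    · simp [hx, integral_indicator (measurableSet_orderedSimplex _ _)]
    · simp [hx]
  · exact (he.integrable_comp_emb (MeasurableEquiv.measurableEmbedding _)).2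
      (hF.integrable_indicator (measurableSet_orderedSimplex _ _))

theorem setIntegral_orderedSimplex_prod_pow (e : ℕ → ℕ) (n : ℕ) {t : ℝ} (ht : 0 ≤ t) :
    ∫ u in orderedSimplex n t, ∏ i : Fin n, u i ^ e i =
      t ^ (∑ i ∈ range n, (e i + 1)) /
        ∏ j ∈ range n, ((∑ i ∈ range (j + 1), (e i + 1) : ℕ) : ℝ) := by
  induction n generalizing t with
  | zero =>
    rw [show orderedSimplex 0 t = univ from
      eq_univ_of_forall fun u => ⟨fun i => i.elim0, fun i => i.elim0⟩]
    simp [measureReal_def, volume_pi]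
  | succ n ih =>
    rw [prod_range_succ, sum_range_succ _ n]
    set s := ∑ i ∈ range n, (e i + 1)
    set P := ∏ j ∈ range n, ((∑ i ∈ range (j + 1), (e i + 1) : ℕ) : ℝ)
    have hint :
        IntegrableOn (fun u : Fin (n + 1) → ℝ => ∏ i, u i ^ e i) (orderedSimplex (n + 1) t) :=
      (continuous_finsetProd _ fun i _ => (continuous_apply i).pow _).integrableOn_Icc.mono_set
        (orderedSimplex_subset_Icc _ _)
    have hinner : ∀ x ∈ Ioo 0 t, ∫ v in orderedSimplex n x,
        ∏ i, (Fin.snoc v x : Fin (n + 1) → ℝ) i ^ e i = x ^ (e n + s) / P := by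
      intro x hx
      simp only [Fin.prod_univ_castSucc, Fin.snoc_castSucc, Fin.snoc_last, Fin.val_castSucc,
        Fin.val_last]
      rw [integral_mul_const, ih hx.1.le, pow_add]
      ring
    rw [setIntegral_orderedSimplex_succ hint, setIntegral_congr_fun measurableSet_Ioo hinner,
      integral_div, ← integral_Ioc_eq_integral_Ioo, ← intervalIntegral.integral_of_le ht,
      integral_pow, zero_pow (by omega), sub_zero, div_div,
      show e n + s + 1 = s + (e n + 1) by ring, mul_comm]
    push_cast
    ring

theorem pi_restrict_Icc_restrict_setOf_strictMono (n : ℕ) (t : ℝ) :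
    (Measure.pi fun _ : Fin n => volume.restrict (Icc (0 : ℝ) t)).restrict {u | StrictMono u} =
      volume.restrict (orderedSimplex n t) := by
  rw [← Measure.restrict_pi_pi, ← volume_pi,
    Measure.restrict_restrict (measurableSet_setOf_strictMono n)]
  exact Measure.restrict_congr_set ((ae_eq_refl _).inter Measure.pi_Ioo_ae_eq_pi_Icc.symm)

theorem cast_sum_range_two_mul_sub_add_one {k j : ℕ} (hj : j ≤ k) :
    ((∑ i ∈ range j, (2 * (k - (i + 1)) + 1) : ℕ) : ℝ) = j * (2 * k - j) := by
  induction j with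
  | zero => simp
  | succ j ih =>
    rw [sum_range_succ, Nat.cast_add, ih (by omega), Nat.cast_add, Nat.cast_mul,
      Nat.cast_sub (by omega)]
    push_cast
    ring

theorem factorial_div_prod_mul_two_mul_sub (k : ℕ) :
    (k ! : ℝ) / ∏ r ∈ Icc 1 k, ((r : ℝ) * (2 * k - r)) = (k - 1)! / (2 * k - 1)! := by
  cases k with
  | zero => simp
  | succ k =>
    have hfac : ∏ j ∈ range (k + 1), ((j : ℝ) + 1) = (k + 1)! := by
      exact_mod_cast prod_range_add_one_eq_factorial (k + 1)
    have hdesc : ∏ j ∈ range (k + 1), (2 * ((k : ℝ) + 1) - (j + 1)) =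
        (2 * k + 1).descFactorial (k + 1) := by
      rw [Nat.descFactorial_eq_prod_range, Nat.cast_prod]
      refine prod_congr rfl fun j hj => ?_
      rw [Nat.cast_sub (by simp at hj; omega)]
      push_cast
      ring
    have hsplit : (k ! : ℝ) * (2 * k + 1).descFactorial (k + 1) = (2 * k + 1)! := by
      have h := Nat.factorial_mul_descFactorial (show k + 1 ≤ 2 * k + 1 by omega)
      rw [show 2 * k + 1 - (k + 1) = k by omega] at h
      exact_mod_cast h
    rw [prod_Icc_one_eq_prod_range, prod_mul_distrib]
    push_cast
    rw [hfac, hdesc, show 2 * (k + 1) - 1 = 2 * k + 1 by omega, ← hsplit]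
    have : (0 : ℝ) < (k + 1)! := by positivity
    have : (0 : ℝ) < (2 * k + 1).descFactorial (k + 1) := by
      exact_mod_cast Nat.descFactorial_pos.2 (by omega)
    field_simp

theorem stmt17_general (k : ℕ) :
    (∫ u, ∏ a : Fin k, (u (Tuple.sort u a)) ^ (2 * (k - (a.1 + 1)))
        ∂(Measure.pi fun _ : Fin k => volume.restrict (Set.Icc (0:ℝ) 1))) =
      (Nat.factorial k : ℝ) / ∏ r ∈ Finset.Icc 1 k, ((r : ℝ) * (2 * k - r)) ∧
    (Nat.factorial k : ℝ) / ∏ r ∈ Finset.Icc 1 k, ((r : ℝ) * (2 * k - r)) =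
      (Nat.factorial (k - 1) : ℝ) / Nat.factorial (2 * k - 1) := by
  refine ⟨?_, factorial_div_prod_mul_two_mul_sub k⟩
  set e : ℕ → ℕ := fun i => 2 * (k - (i + 1))
  have hint : IntegrableOn (fun u : Fin k → ℝ => ∏ a : Fin k, u a ^ e a) {u | StrictMono u}
      (Measure.pi fun _ : Fin k => volume.restrict (Icc (0 : ℝ) 1)) := by
    rw [IntegrableOn, pi_restrict_Icc_restrict_setOf_strictMono]
    exact (continuous_finsetProd _ fun a _ => (continuous_apply a).pow _).integrableOn_Icc.mono_set
      (orderedSimplex_subset_Icc _ _)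
  have hden : ∏ r ∈ Icc 1 k, ((r : ℝ) * (2 * k - r)) =
      ∏ j ∈ range k, ((∑ i ∈ range (j + 1), (e i + 1) : ℕ) : ℝ) := by
    rw [prod_Icc_one_eq_prod_range]
    exact prod_congr rfl fun j hj =>
      (cast_sum_range_two_mul_sub_add_one (by simp at hj; omega)).symm
  refine (integral_comp_sort _ hint).trans ?_
  rw [pi_restrict_Icc_restrict_setOf_strictMono,
    setIntegral_orderedSimplex_prod_pow e k zero_le_one, one_pow, hden, nsmul_eq_mul, mul_one_div]

theorem stmt17 (k : ℕ) (hk : 1 ≤ k) :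
    (∫ u, ∏ a : Fin k, (u (Tuple.sort u a)) ^ (2 * (k - (a.1 + 1)))
        ∂(Measure.pi fun _ : Fin k => volume.restrict (Set.Icc (0:ℝ) 1))) =
      (Nat.factorial k : ℝ) / ∏ r ∈ Finset.Icc 1 k, ((r : ℝ) * (2 * k - r)) ∧
    (Nat.factorial k : ℝ) / ∏ r ∈ Finset.Icc 1 k, ((r : ℝ) * (2 * k - r)) =
      (Nat.factorial (k - 1) : ℝ) / Nat.factorial (2 * k - 1) :=
  stmt17_general k
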